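/- Let μ be a finite Borel measure on ℂ^n whose support K = supp(μ) is a compact regular set, and suppose μ satisfies the mass density condition: there exist r₀ > 0 and T > 0 such that μ(B(z,r)) ≥ r^T for all z ∈ K and all 0 < r < r₀. Then (K, μ) satisfies the Bernstein–Markov property. -/

import Mathlib

/-!
Let `z₀` be a point of `K` where `|p|` attains its maximum `M`. Regularity of `K` makes
`V_K < log a` on a fixed neighbourhood `K_δ` of `K`, so the Bernstein–Walsh inequality bounds `|p|`
by `a^k M` on `B(z₀, δ)`. The Schwarz lemma then keeps `|p| ≥ M/2` on the much smaller ball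
`B(z₀, ρ/a^k)` (`ρ ≤ δ/4`), whose mass is at least `(ρ/a^k)^T`; hence
`∫_K |p|² dμ ≥ (M/2)² (ρ/a^k)^T`.
Choosing `a = (1+ε)^(2/T)` turns this into the Bernstein–Markov inequality; the mass density
condition only weakens as `T` grows (for `r < 1`), so `T > 0` may be assumed.
-/

open MeasureTheory

variable {n : ℕ}

/-- The defining family for the extremal function of `E ⊆ ℂ^n`:
the values `(1/deg p) log |p(z)|` over nonconstant polynomials `p` with `sup_E |p| ≤ 1`. -/
def extremalSet (E : Set (EuclideanSpace ℂ (Fin n))) (z : EuclideanSpace ℂ (Fin n)) :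
    Set ℝ :=
  {v | ∃ p : MvPolynomial (Fin n) ℂ, 0 < p.totalDegree ∧
    (∀ w ∈ E, ‖MvPolynomial.eval (fun i => w i) p‖ ≤ 1) ∧
    v = (p.totalDegree : ℝ)⁻¹ * Real.log ‖MvPolynomial.eval (fun i => z i) p‖}

/-- The extremal function `V_E(z) = sup { (1/deg p) log |p(z)| }`. -/
noncomputable def extremalFunction (E : Set (EuclideanSpace ℂ (Fin n)))
    (z : EuclideanSpace ℂ (Fin n)) : ℝ :=
  sSup (extremalSet E z)

/-- A compact set `E ⊆ ℂ^n` is regular if its extremal function `V_E` is finite-valued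
and continuous on `ℂ^n`, with `V_E = 0` on `E`. -/
def RegularSet (E : Set (EuclideanSpace ℂ (Fin n))) : Prop :=
  (∀ z, BddAbove (extremalSet E z)) ∧ Continuous (extremalFunction E) ∧
    ∀ z ∈ E, extremalFunction E z = 0

variable [MeasurableSpace (EuclideanSpace ℂ (Fin n))]
  [BorelSpace (EuclideanSpace ℂ (Fin n))]

/-- `(K, ν)` satisfies the Bernstein–Markov property. -/
def BernsteinMarkov (K : Set (EuclideanSpace ℂ (Fin n)))
    (ν : Measure (EuclideanSpace ℂ (Fin n))) : Prop :=
  ∀ ε : ℝ, 0 < ε → ∃ C : ℝ, 0 < C ∧ ∀ k : ℕ, 1 ≤ k → ∀ p : MvPolynomial (Fin n) ℂ,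
    p.totalDegree ≤ k → ∀ z ∈ K,
      ‖MvPolynomial.eval (fun i => z i) p‖ ≤ C * (1 + ε) ^ k *
        Real.sqrt (∫ w in K, ‖MvPolynomial.eval (fun i => w i) p‖ ^ 2 ∂ν)

open Metric

theorem MvPolynomial.differentiable_eval {σ 𝕜 : Type*} [Fintype σ] [NontriviallyNormedField 𝕜]
    (p : MvPolynomial σ 𝕜) : Differentiable 𝕜 fun x : σ → 𝕜 => eval x p := by
  simp_rw [eval_eq]
  fun_prop

theorem MvPolynomial.differentiable_eval_ofLp {ι : Type*} [Fintype ι] (p : MvPolynomial ι ℂ) :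
    Differentiable ℂ fun w : EuclideanSpace ℂ ι => eval (fun i => w i) p :=
  p.differentiable_eval.comp (PiLp.continuousLinearEquiv 2 ℂ fun _ : ι => ℂ).differentiable

theorem MvPolynomial.totalDegree_smul_of_ne_zero {σ K : Type*} [Field K] {a : K} (ha : a ≠ 0)
    (p : MvPolynomial σ K) : (a • p).totalDegree = p.totalDegree :=
  le_antisymm (totalDegree_smul_le a p) <| by
    simpa [smul_smul, inv_mul_cancel₀ ha] using totalDegree_smul_le a⁻¹ (a • p)

theorem Complex.norm_sub_le_of_norm_le_on_ball {E F : Type*} [NormedAddCommGroup E]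
    [NormedSpace ℂ E] [NormedAddCommGroup F] [NormedSpace ℂ F] {f : E → F} {c z : E} {R B : ℝ}
    (hd : DifferentiableOn ℂ f (ball c R)) (hB : ∀ w ∈ ball c R, ‖f w‖ ≤ B)
    (hz : z ∈ ball c R) : ‖f z - f c‖ ≤ 2 * B / R * ‖z - c‖ := by
  have hc : c ∈ ball c R := mem_ball_self (pos_of_mem_ball hz)
  have hmaps : Set.MapsTo f (ball c R) (closedBall (f c) (2 * B)) := fun w hw => by
    rw [mem_closedBall, dist_eq_norm]
    linarith [norm_sub_le (f w) (f c), hB w hw, hB c hc]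
  simpa [dist_eq_norm] using Complex.dist_le_div_mul_dist_of_mapsTo_ball hd hmaps hz

theorem Complex.half_norm_le_norm_of_norm_le_on_ball {E F : Type*} [NormedAddCommGroup E]
    [NormedSpace ℂ E] [NormedAddCommGroup F] [NormedSpace ℂ F] {f : E → F} {c z : E} {R A : ℝ}
    (hd : DifferentiableOn ℂ f (ball c R)) (hA : 1 ≤ A) (hB : ∀ w ∈ ball c R, ‖f w‖ ≤ A * ‖f c‖)
    (hz : z ∈ ball c (R / (4 * A))) : ‖f c‖ / 2 ≤ ‖f z‖ := by
  have hR : 0 < R := (div_pos_iff_of_pos_right (by linarith)).mp (pos_of_mem_ball hz)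
  have hzR : z ∈ ball c R := ball_subset_ball (div_le_self hR.le (by linarith)) hz
  have hdist : ‖z - c‖ < R / (4 * A) := mem_ball_iff_norm.mp hz
  have hsub := norm_sub_le_of_norm_le_on_ball hd hB hzR
  have hsmall : 2 * (A * ‖f c‖) / R * ‖z - c‖ ≤ ‖f c‖ / 2 := by
    calc 2 * (A * ‖f c‖) / R * ‖z - c‖ ≤ 2 * (A * ‖f c‖) / R * (R / (4 * A)) := by
          gcongr
    _ = ‖f c‖ / 2 := by field_simp; ring
  linarith [norm_sub_norm_le (f c) (f z), norm_sub_rev (f c) (f z)]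

theorem mul_le_integral_of_le_on {X : Type*} [MeasurableSpace X] {μ : Measure X}
    [IsFiniteMeasure μ] {g : X → ℝ} {s : Set X} {c m : ℝ} (hg : Integrable g μ) (hg0 : 0 ≤ g)
    (hc : 0 ≤ c) (hgs : ∀ x ∈ s, c ≤ g x) (hμs : ENNReal.ofReal m ≤ μ s) :
    c * m ≤ ∫ x, g x ∂μ := by
  have hm : m ≤ μ.real {x | c ≤ g x} :=
    (ENNReal.ofReal_le_iff_le_toReal (measure_ne_top _ _)).mp (hμs.trans (measure_mono hgs))
  calc c * m ≤ c * μ.real {x | c ≤ g x} := by gcongr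
  _ ≤ ∫ x, g x ∂μ := mul_meas_ge_le_integral_of_nonneg (ae_of_all _ hg0) hg c

def HasMassDensity {X : Type*} [PseudoMetricSpace X] [MeasurableSpace X] (μ : Measure X)
    (K : Set X) (r₀ T : ℝ) : Prop :=
  ∀ z ∈ K, ∀ r : ℝ, 0 < r → r < r₀ → ENNReal.ofReal (r ^ T) ≤ μ (ball z r)

theorem HasMassDensity.mono_exponent {X : Type*} [PseudoMetricSpace X] [MeasurableSpace X]
    {μ : Measure X} {K : Set X} {r₀ T T' : ℝ} (h : HasMassDensity μ K r₀ T) (hT : T ≤ T') :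
    HasMassDensity μ K (min r₀ 1) T' := fun z hz r hr hr' =>
  (ENNReal.ofReal_le_ofReal (Real.rpow_le_rpow_of_exponent_ge hr
    (hr'.trans_le (min_le_right _ _)).le hT)).trans
    (h z hz r hr (hr'.trans_le (min_le_left _ _)))

section Extremal

variable {m : ℕ} {K : Set (EuclideanSpace ℂ (Fin m))}

theorem RegularSet.exists_thickening_extremalFunction_lt (hreg : RegularSet K)
    (hKc : IsCompact K) {η : ℝ} (hη : 0 < η) :
    ∃ δ, 0 < δ ∧ thickening δ K ⊆ {w | extremalFunction K w < η} :=
  hKc.exists_thickening_subset_open (isOpen_lt hreg.2.1 continuous_const) fun w hw => by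
    simp [hreg.2.2 w hw, hη]

/-- The Bernstein–Walsh inequality. -/
theorem norm_eval_le_mul_exp_extremalFunction {p : MvPolynomial (Fin m) ℂ} {M : ℝ}
    {w : EuclideanSpace ℂ (Fin m)} (hM : 0 < M) (hK : K.Nonempty)
    (hpK : ∀ v ∈ K, ‖MvPolynomial.eval (fun i => v i) p‖ ≤ M)
    (hbdd : BddAbove (extremalSet K w)) :
    ‖MvPolynomial.eval (fun i => w i) p‖ ≤ M * Real.exp (p.totalDegree * extremalFunction K w) := by
  rcases Nat.eq_zero_or_pos p.totalDegree with hdeg | hdeg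
  · obtain ⟨v, hv⟩ := hK
    rw [MvPolynomial.totalDegree_eq_zero_iff_eq_C.mp hdeg] at hpK ⊢
    simpa [hdeg] using hpK v hv
  rcases (norm_nonneg (MvPolynomial.eval (fun i => w i) p)).eq_or_lt with h0 | hpos
  · rw [← h0]
    positivity
  have hMC : ((M : ℂ)⁻¹) ≠ 0 := by simp [hM.ne']
  have hq : ∀ v : EuclideanSpace ℂ (Fin m), ‖MvPolynomial.eval (fun i => v i) ((M : ℂ)⁻¹ • p)‖
      = M⁻¹ * ‖MvPolynomial.eval (fun i => v i) p‖ := fun v => by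
    simp [norm_inv, abs_of_pos hM]
  have hmem : (p.totalDegree : ℝ)⁻¹ * Real.log (M⁻¹ * ‖MvPolynomial.eval (fun i => w i) p‖)
      ∈ extremalSet K w := by
    refine ⟨(M : ℂ)⁻¹ • p, by rwa [MvPolynomial.totalDegree_smul_of_ne_zero hMC], fun v hv => ?_,
      by rw [hq, MvPolynomial.totalDegree_smul_of_ne_zero hMC]⟩
    rw [hq, inv_mul_le_iff₀ hM, mul_one]
    exact hpK v hv
  have hlog := le_csSup hbdd hmem
  rw [inv_mul_le_iff₀ (by exact_mod_cast hdeg)] at hlog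
  calc ‖MvPolynomial.eval (fun i => w i) p‖
      = M * (M⁻¹ * ‖MvPolynomial.eval (fun i => w i) p‖) := by field_simp
  _ ≤ M * Real.exp (p.totalDegree * extremalFunction K w) := by
      gcongr
      exact (Real.log_le_iff_le_exp (by positivity)).mp hlog

theorem sq_half_norm_eval_mul_rpow_le_setIntegral
    [MeasurableSpace (EuclideanSpace ℂ (Fin m))] [OpensMeasurableSpace (EuclideanSpace ℂ (Fin m))]
    {μ : Measure (EuclideanSpace ℂ (Fin m))} [IsFiniteMeasure μ] (hμK : ∀ᵐ x ∂μ, x ∈ K)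
    (hKc : IsCompact K) (hbdd : ∀ w, BddAbove (extremalSet K w)) {a δ ρ r₀ T : ℝ} (ha : 1 ≤ a)
    (hδ : thickening δ K ⊆ {w | extremalFunction K w < Real.log a}) (hρ : 0 < ρ)
    (hρδ : ρ ≤ δ / 4) (hρr₀ : ρ < r₀) (hmass : HasMassDensity μ K r₀ T)
    {p : MvPolynomial (Fin m) ℂ} {k : ℕ} (hdeg : p.totalDegree ≤ k) {z : EuclideanSpace ℂ (Fin m)}
    (hz : z ∈ K) :
    (‖MvPolynomial.eval (fun i => z i) p‖ / 2) ^ 2 * (ρ / a ^ k) ^ T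
      ≤ ∫ w in K, ‖MvPolynomial.eval (fun i => w i) p‖ ^ 2 ∂μ := by
  set f := fun w : EuclideanSpace ℂ (Fin m) => MvPolynomial.eval (fun i => w i) p
  show (‖f z‖ / 2) ^ 2 * _ ≤ ∫ w in K, ‖f w‖ ^ 2 ∂μ
  have hf : Differentiable ℂ f := p.differentiable_eval_ofLp
  obtain ⟨z₀, hz₀, hmax⟩ := hKc.exists_isMaxOn ⟨z, hz⟩ hf.continuous.norm.continuousOn
  have hI : 0 ≤ ∫ w in K, ‖f w‖ ^ 2 ∂μ :=
    setIntegral_nonneg_of_ae (ae_of_all _ fun _ => by positivity)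
  rcases (norm_nonneg (f z₀)).eq_or_lt with h0 | hM
  · have : ‖f z‖ = 0 := le_antisymm (h0 ▸ hmax hz) (norm_nonneg _)
    simpa [this] using hI
  have hak : 1 ≤ a ^ k := one_le_pow₀ ha
  have hBW : ∀ w ∈ ball z₀ δ, ‖f w‖ ≤ a ^ k * ‖f z₀‖ := fun w hw => by
    have hV := hδ (ball_subset_thickening hz₀ δ hw)
    calc ‖f w‖ ≤ ‖f z₀‖ * Real.exp (p.totalDegree * extremalFunction K w) :=
          norm_eval_le_mul_exp_extremalFunction hM ⟨z, hz⟩ hmax (hbdd w)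
    _ ≤ ‖f z₀‖ * Real.exp (k * Real.log a) := by
          gcongr _ * Real.exp ?_
          calc (p.totalDegree : ℝ) * extremalFunction K w ≤ p.totalDegree * Real.log a := by
                gcongr; exact hV.le
          _ ≤ k * Real.log a := by gcongr; exact Real.log_nonneg ha
    _ = a ^ k * ‖f z₀‖ := by
          rw [← Real.log_pow, Real.exp_log (by positivity), mul_comm]
  have hlow : ∀ w ∈ ball z₀ (ρ / a ^ k), (‖f z₀‖ / 2) ^ 2 ≤ ‖f w‖ ^ 2 := fun w hw => by
    have hw' : w ∈ ball z₀ (δ / (4 * a ^ k)) := ball_subset_ball (by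
      rw [← div_div]; gcongr) hw
    gcongr
    exact Complex.half_norm_le_norm_of_norm_le_on_ball hf.differentiableOn hak hBW hw'
  have hrad : ρ / a ^ k < r₀ := (div_le_self hρ.le hak).trans_lt hρr₀
  calc (‖f z‖ / 2) ^ 2 * (ρ / a ^ k) ^ T ≤ (‖f z₀‖ / 2) ^ 2 * (ρ / a ^ k) ^ T := by
        gcongr; exact hmax hz
  _ ≤ ∫ w in K, ‖f w‖ ^ 2 ∂μ := by
        have hint := (hf.continuous.norm.pow 2).continuousOn.integrableOn_compact (μ := μ) hKc
        refine mul_le_integral_of_le_on hint (fun _ => by positivity) (by positivity) hlow ?_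
        rw [Measure.restrict_eq_self_of_ae_mem hμK]
        exact hmass z₀ hz₀ _ (by positivity) hrad

end Extremal

theorem le_two_div_sqrt_mul_mul_sqrt_of_sq_half_mul_div_le {M c b I : ℝ} (hc : 0 < c)
    (hb : 0 < b) (h : (M / 2) ^ 2 * (c / b ^ 2) ≤ I) : M ≤ 2 / √c * b * √I := by
  have hsqrt : M * √c / (2 * b) ≤ √I := Real.le_sqrt_of_sq_le <| by
    convert h using 1
    rw [div_pow, mul_pow, Real.sq_sqrt hc.le]
    ring
  calc M = 2 / √c * b * (M * √c / (2 * b)) := by field_simp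
  _ ≤ 2 / √c * b * √I := by gcongr

theorem div_rpow_two_div_pow_rpow {ρ b T : ℝ} (hρ : 0 ≤ ρ) (hb : 0 ≤ b) (hT : T ≠ 0) (k : ℕ) :
    (ρ / (b ^ (2 / T)) ^ k) ^ T = ρ ^ T / (b ^ k) ^ 2 := by
  rw [Real.div_rpow hρ (by positivity), ← Real.rpow_natCast, ← Real.rpow_mul hb,
    ← Real.rpow_mul hb, ← pow_mul, ← Real.rpow_natCast]
  congr 2
  field_simp
  push_cast
  ring

theorem bernsteinMarkov_of_hasMassDensity {μ : Measure (EuclideanSpace ℂ (Fin n))}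
    [IsFiniteMeasure μ] {K : Set (EuclideanSpace ℂ (Fin n))} (hμK : ∀ᵐ x ∂μ, x ∈ K)
    (hKc : IsCompact K) (hreg : RegularSet K) {r₀ T : ℝ} (hr₀ : 0 < r₀) (hT : 0 < T)
    (hmass : HasMassDensity μ K r₀ T) : BernsteinMarkov K μ := by
  intro ε hε
  have ha : 1 < (1 + ε) ^ (2 / T) := Real.one_lt_rpow (by linarith) (by positivity)
  obtain ⟨δ, hδ, hthick⟩ := hreg.exists_thickening_extremalFunction_lt hKc (Real.log_pos ha)
  set ρ := min (δ / 4) (r₀ / 2)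
  have hρ : 0 < ρ := by positivity
  refine ⟨2 / √(ρ ^ T), by positivity, fun k _ p hdeg z hz => ?_⟩
  have key := sq_half_norm_eval_mul_rpow_le_setIntegral hμK hKc hreg.1 ha.le hthick hρ
    (min_le_left _ _) ((min_le_right _ _).trans_lt (half_lt_self hr₀)) hmass hdeg hz
  rw [div_rpow_two_div_pow_rpow hρ.le (by linarith) hT.ne'] at key
  exact le_two_div_sqrt_mul_mul_sqrt_of_sq_half_mul_div_le (by positivity) (by positivity) key

theorem mass_density_implies_bernstein_markov_general
    (μ : Measure (EuclideanSpace ℂ (Fin n))) [IsFiniteMeasure μ]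
    (K : Set (EuclideanSpace ℂ (Fin n)))
    (hsupp : ∀ z, z ∈ K ↔ ∀ r : ℝ, 0 < r → 0 < μ (Metric.ball z r))
    (hKc : IsCompact K) (hreg : RegularSet K)
    (r₀ T : ℝ) (hr₀ : 0 < r₀)
    (hmass : ∀ z ∈ K, ∀ r : ℝ, 0 < r → r < r₀ →
      ENNReal.ofReal (r ^ T) ≤ μ (Metric.ball z r)) :
    BernsteinMarkov K μ := by
  have hK : K = μ.support :=
    Set.ext fun z => (hsupp z).trans nhds_basis_ball.mem_measureSupport.symm
  have hmass' : HasMassDensity μ K (min r₀ 1) (max T 1) :=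
    HasMassDensity.mono_exponent hmass (le_max_left _ _)
  exact bernsteinMarkov_of_hasMassDensity (hK ▸ Measure.support_mem_ae) hKc hreg
    (lt_min hr₀ one_pos) (lt_max_of_lt_right one_pos) hmass'

/-- If `μ` is a finite measure whose support `K` is a compact regular set and `μ`
satisfies the mass density condition `μ(B(z,r)) ≥ r^T` for all `z ∈ K` and `0 < r < r₀`,
then `(K, μ)` satisfies the Bernstein–Markov property. -/
theorem mass_density_implies_bernstein_markov
    (μ : Measure (EuclideanSpace ℂ (Fin n))) [IsFiniteMeasure μ]
    (K : Set (EuclideanSpace ℂ (Fin n)))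
    (hsupp : ∀ z, z ∈ K ↔ ∀ r : ℝ, 0 < r → 0 < μ (Metric.ball z r))
    (hKc : IsCompact K) (hreg : RegularSet K)
    (r₀ T : ℝ) (hr₀ : 0 < r₀) (hT : 0 < T)
    (hmass : ∀ z ∈ K, ∀ r : ℝ, 0 < r → r < r₀ →
      ENNReal.ofReal (r ^ T) ≤ μ (Metric.ball z r)) :
    BernsteinMarkov K μ :=
  mass_density_implies_bernstein_markov_general μ K hsupp hKc hreg r₀ T hr₀ hmass
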